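/- arXiv:2511.14556 — 6 statements merged into one kernel-verified Lean document; each statement's English description precedes it below -/
import Mathlib

section
/- Suppose X, V, H are linear operators on a complex inner product space of smooth functions (or more abstractly, densely defined operators on a Hilbert space restricted to a common invariant domain) satisfying: X* = -X, H = -[X,V] (i.e. [X,V] = -H), [X,H] = RV for some operator R, and H*V - V*H = -(n-1)X. Then the operator identity X*V*VX - V*X*XV = (n-1)X*X - V*RV holds on the common domain. -/
open scoped InnerProductSpace

/-- Abstract (pointwise) Pestov identity: if `X* = -X`, `H = -[X,V]`, `[X,H] = RV`
and `H*V - V*H = -(n-1)X`, then `X*V*VX - V*X*XV = (n-1)X*X - V*RV`. -/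
theorem stmt3 {E : Type*} [NormedAddCommGroup E] [InnerProductSpace ℂ E]
    (n : ℕ) (X V H R Xs Vs Hs : E →ₗ[ℂ] E)
    (hXadj : ∀ u v : E, ⟪X u, v⟫_ℂ = ⟪u, Xs v⟫_ℂ)
    (hXs : Xs = -X)
    (hVadj : ∀ u v : E, ⟪V u, v⟫_ℂ = ⟪u, Vs v⟫_ℂ)
    (hHadj : ∀ u v : E, ⟪H u, v⟫_ℂ = ⟪u, Hs v⟫_ℂ)
    (hH : H = -(X ∘ₗ V - V ∘ₗ X))
    (hXH : X ∘ₗ H - H ∘ₗ X = R ∘ₗ V)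
    (hHV : Hs ∘ₗ V - Vs ∘ₗ H = (-((n : ℂ) - 1)) • X) :
    Xs ∘ₗ Vs ∘ₗ V ∘ₗ X - Vs ∘ₗ Xs ∘ₗ X ∘ₗ V
      = ((n : ℂ) - 1) • (Xs ∘ₗ X) - Vs ∘ₗ R ∘ₗ V := by
  subst hXs hH
  have hHs : Hs = (-X) ∘ₗ Vs - Vs ∘ₗ (-X) := by
    apply LinearMap.ext; intro v
    apply ext_inner_left ℂ; intro u
    rw [← hHadj]
    simp only [LinearMap.neg_apply, LinearMap.sub_apply, LinearMap.comp_apply,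
      inner_sub_left, inner_sub_right, inner_neg_left, inner_neg_right,
      hVadj, hXadj]
    ring
  subst hHs
  rw [← hXH]
  have A := congrArg (fun M : E →ₗ[ℂ] E => M ∘ₗ X) hHV
  have key : ∀ a v w : E →ₗ[ℂ] E, ∀ c : ℂ,
      ((((-a) ∘ₗ w - w ∘ₗ (-a)) ∘ₗ v - w ∘ₗ (-(a ∘ₗ v - v ∘ₗ a))) ∘ₗ a = (-c • a) ∘ₗ a) →
      (-a) ∘ₗ w ∘ₗ v ∘ₗ a - w ∘ₗ (-a) ∘ₗ a ∘ₗ v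
        = c • ((-a) ∘ₗ a) - w ∘ₗ (a ∘ₗ (-(a ∘ₗ v - v ∘ₗ a)) - (-(a ∘ₗ v - v ∘ₗ a)) ∘ₗ a) := by
    intro a v w c hA
    simp only [← Module.End.mul_eq_comp] at hA ⊢
    rw [← sub_eq_zero]
    have h0 : (((-a) * w - w * (-a)) * v - w * (-(a * v - v * a))) * a - (-c • a) * a = 0 :=
      sub_eq_zero_of_eq hA
    calc (-a) * (w * (v * a)) - w * ((-a) * (a * v)) -
          (c • ((-a) * a) - w * (a * (-(a * v - v * a)) - (-(a * v - v * a)) * a))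
        = (((-a) * w - w * (-a)) * v - w * (-(a * v - v * a))) * a - (-c • a) * a := by
          noncomm_ring [smul_smul, neg_zsmul, one_zsmul, neg_smul, smul_neg, neg_neg]
      _ = 0 := h0
  exact key X V Vs _ A
end

section
/- Suppose X, V, H, R are as in the abstract Pestov setup: X* = -X, [X,V] = -H, [X,H] = RV, and H*V - V*H = -(n-1)X, all acting on a common invariant domain D in a Hilbert space, with adjoints well-defined on D. Then for every u ∈ D, ‖VXu‖² - ‖XVu‖² = (n-1)‖Xu‖² - ⟨RVu, Vu⟩. -/
open scoped InnerProductSpace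

section Pestov

variable {𝕜 E : Type*} [RCLike 𝕜] [NormedAddCommGroup E] [InnerProductSpace 𝕜 E]

theorem inner_self_sub_inner_self_of_eq_add {a b h : E} (hab : a = b + h) :
    ⟪a, a⟫_𝕜 - ⟪b, b⟫_𝕜 = ⟪h, a⟫_𝕜 + ⟪b, h⟫_𝕜 := by
  subst hab
  simp only [inner_add_left, inner_add_right]
  ring

theorem inner_map_eq_neg_of_adjoint_eq_neg {X Xs : E →ₗ[𝕜] E}
    (hadj : ∀ u v : E, ⟪X u, v⟫_𝕜 = ⟪u, Xs v⟫_𝕜) (hXs : Xs = -X) (u v : E) :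
    ⟪X u, v⟫_𝕜 = -⟪u, X v⟫_𝕜 := by
  rw [hadj, hXs, LinearMap.neg_apply, inner_neg_right]

/-- Since `VXu = XVu + Hu`, the difference of squares is `⟪Hu, VXu⟫ + ⟪XVu, Hu⟫`; moving `H` and
`V` across by adjoints and `X` across by skewness turns it into `⟪u, (H*V - V*H) Xu⟫ - ⟪Vu, RVu⟫`. -/
theorem inner_pestov_identity {X V H R Vs Hs : E →ₗ[𝕜] E} (c : 𝕜)
    (hX : ∀ u v : E, ⟪X u, v⟫_𝕜 = -⟪u, X v⟫_𝕜)
    (hVadj : ∀ u v : E, ⟪V u, v⟫_𝕜 = ⟪u, Vs v⟫_𝕜)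
    (hHadj : ∀ u v : E, ⟪H u, v⟫_𝕜 = ⟪u, Hs v⟫_𝕜)
    (hH : H = -(X ∘ₗ V - V ∘ₗ X))
    (hXH : X ∘ₗ H - H ∘ₗ X = R ∘ₗ V)
    (hHV : Hs ∘ₗ V - Vs ∘ₗ H = -c • X) (u : E) :
    ⟪V (X u), V (X u)⟫_𝕜 - ⟪X (V u), X (V u)⟫_𝕜
      = c * ⟪X u, X u⟫_𝕜 - ⟪V u, R (V u)⟫_𝕜 := by
  have hVX : V (X u) = X (V u) + H u := by
    rw [hH]
    simp
  have hXHu : X (H u) = H (X u) + R (V u) := by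
    have h := LinearMap.congr_fun hXH u
    simp only [LinearMap.sub_apply, LinearMap.comp_apply] at h
    exact sub_eq_iff_eq_add'.mp h
  have hHVXu : Hs (V (X u)) - Vs (H (X u)) = -c • X (X u) := by
    simpa using LinearMap.congr_fun hHV (X u)
  calc ⟪V (X u), V (X u)⟫_𝕜 - ⟪X (V u), X (V u)⟫_𝕜
      = ⟪H u, V (X u)⟫_𝕜 + ⟪X (V u), H u⟫_𝕜 := inner_self_sub_inner_self_of_eq_add hVX
    _ = ⟪u, Hs (V (X u))⟫_𝕜 - ⟪u, Vs (H (X u))⟫_𝕜 - ⟪V u, R (V u)⟫_𝕜 := by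
      rw [hHadj, hX, hXHu, inner_add_right, hVadj]
      ring
    _ = ⟪u, -c • X (X u)⟫_𝕜 - ⟪V u, R (V u)⟫_𝕜 := by
      rw [← inner_sub_right, hHVXu]
    _ = c * ⟪X u, X u⟫_𝕜 - ⟪V u, R (V u)⟫_𝕜 := by
      rw [inner_smul_right, hX u (X u)]
      ring

end Pestov

/-- Integrated (global) abstract Pestov identity:
`‖VXu‖² - ‖XVu‖² = (n-1)‖Xu‖² - ⟨RVu, Vu⟩`. -/
theorem stmt4 {E : Type*} [NormedAddCommGroup E] [InnerProductSpace ℂ E]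
    (n : ℕ) (X V H R Xs Vs Hs : E →ₗ[ℂ] E)
    (hXadj : ∀ u v : E, ⟪X u, v⟫_ℂ = ⟪u, Xs v⟫_ℂ)
    (hXs : Xs = -X)
    (hVadj : ∀ u v : E, ⟪V u, v⟫_ℂ = ⟪u, Vs v⟫_ℂ)
    (hHadj : ∀ u v : E, ⟪H u, v⟫_ℂ = ⟪u, Hs v⟫_ℂ)
    (hH : H = -(X ∘ₗ V - V ∘ₗ X))
    (hXH : X ∘ₗ H - H ∘ₗ X = R ∘ₗ V)
    (hHV : Hs ∘ₗ V - Vs ∘ₗ H = (-((n : ℂ) - 1)) • X) :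
    ∀ u : E, ‖V (X u)‖ ^ 2 - ‖X (V u)‖ ^ 2
      = ((n : ℝ) - 1) * ‖X u‖ ^ 2 - (⟪R (V u), V u⟫_ℂ).re := by
  intro u
  have key := congrArg Complex.re <| inner_pestov_identity _
    (inner_map_eq_neg_of_adjoint_eq_neg hXadj hXs) hVadj hHadj hH hXH hHV u
  rw [inner_self_eq_norm_sq_to_K (V (X u)), inner_self_eq_norm_sq_to_K (X (V u)),
    inner_self_eq_norm_sq_to_K (X u)] at key
  rw [← inner_conj_symm, Complex.conj_re]
  simpa [← Complex.ofReal_pow] using key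
end

section
/- In the abstract Pestov setup (X* = -X, [X,V] = -H, [X,H] = RV, H*V - V*H = -(n-1)X on a common domain), suppose moreover that ⟨Ru, u⟩ ≤ -‖Pu‖² for all u, where P is some operator (a 'negative curvature' assumption). Then any u in the domain with Xu = 0 satisfies XVu = 0 and PVu = 0. -/
open scoped InnerProductSpace

/-! At a vector `u` with `Xu = 0` the commutator relations give `Hu = -XVu` and `RVu = XHu`, so
skew-adjointness of `X` yields `⟨RVu, Vu⟩ = ‖XVu‖²`. Against `⟨RVu, Vu⟩ ≤ -‖PVu‖²` this forces
`‖XVu‖² + ‖PVu‖² ≤ 0`. -/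

lemma eq_zero_and_eq_zero_of_norm_sq_le_neg_norm_sq {E F : Type*} [NormedAddCommGroup E]
    [NormedAddCommGroup F] {x : E} {y : F} (h : ‖x‖ ^ 2 ≤ -‖y‖ ^ 2) : x = 0 ∧ y = 0 := by
  have hx : ‖x‖ ^ 2 = 0 := le_antisymm (by nlinarith [sq_nonneg ‖y‖]) (sq_nonneg _)
  have hy : ‖y‖ ^ 2 = 0 := le_antisymm (by nlinarith [sq_nonneg ‖x‖]) (sq_nonneg _)
  simpa using And.intro hx hy

lemma re_inner_R_V_self_eq_norm_sq_X_V {𝕜 E : Type*} [RCLike 𝕜] [NormedAddCommGroup E]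
    [InnerProductSpace 𝕜 E] {X V H R : E →ₗ[𝕜] E} (hX : ∀ u v : E, ⟪X u, v⟫_𝕜 = -⟪u, X v⟫_𝕜)
    (hH : H = -(X ∘ₗ V - V ∘ₗ X)) (hXH : X ∘ₗ H - H ∘ₗ X = R ∘ₗ V) {u : E} (hu : X u = 0) :
    RCLike.re ⟪R (V u), V u⟫_𝕜 = ‖X (V u)‖ ^ 2 := by
  have hHu : H u = -X (V u) := by simp [hH, hu]
  have hRVu : R (V u) = X (H u) := by
    simpa [hu] using (LinearMap.congr_fun hXH u).symm
  rw [hRVu, hX, hHu, inner_neg_left, neg_neg, inner_self_eq_norm_sq]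

theorem stmt5_general {E : Type*} [NormedAddCommGroup E] [InnerProductSpace ℂ E]
    (X V H R Xs : E →ₗ[ℂ] E)
    (hXadj : ∀ u v : E, ⟪X u, v⟫_ℂ = ⟪u, Xs v⟫_ℂ)
    (hXs : Xs = -X)
    (hH : H = -(X ∘ₗ V - V ∘ₗ X))
    (hXH : X ∘ₗ H - H ∘ₗ X = R ∘ₗ V) :
    ∀ (P : E →ₗ[ℂ] E), (∀ u : E, (⟪R u, u⟫_ℂ).re ≤ -‖P u‖ ^ 2) →
      ∀ u : E, X u = 0 → X (V u) = 0 ∧ P (V u) = 0 := by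
  intro P hP u hu
  have hX : ∀ u v : E, ⟪X u, v⟫_ℂ = -⟪u, X v⟫_ℂ := fun u v => by
    simp [hXadj, hXs]
  apply eq_zero_and_eq_zero_of_norm_sq_le_neg_norm_sq
  rw [← re_inner_R_V_self_eq_norm_sq_X_V hX hH hXH hu]
  exact hP (V u)

/-- Under a negative-curvature assumption `⟨Ru,u⟩ ≤ -‖Pu‖²`,
any `u` with `Xu = 0` satisfies `XVu = 0` and `PVu = 0`. -/
theorem stmt5 {E : Type*} [NormedAddCommGroup E] [InnerProductSpace ℂ E]
    (n : ℕ) (X V H R Xs Vs Hs : E →ₗ[ℂ] E)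
    (hXadj : ∀ u v : E, ⟪X u, v⟫_ℂ = ⟪u, Xs v⟫_ℂ)
    (hXs : Xs = -X)
    (hVadj : ∀ u v : E, ⟪V u, v⟫_ℂ = ⟪u, Vs v⟫_ℂ)
    (hHadj : ∀ u v : E, ⟪H u, v⟫_ℂ = ⟪u, Hs v⟫_ℂ)
    (hH : H = -(X ∘ₗ V - V ∘ₗ X))
    (hXH : X ∘ₗ H - H ∘ₗ X = R ∘ₗ V)
    (hHV : Hs ∘ₗ V - Vs ∘ₗ H = (-((n : ℂ) - 1)) • X) :
    ∀ (P : E →ₗ[ℂ] E), (∀ u : E, (⟪R u, u⟫_ℂ).re ≤ -‖P u‖ ^ 2) →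
      ∀ u : E, X u = 0 → X (V u) = 0 ∧ P (V u) = 0 :=
  stmt5_general X V H R Xs hXadj hXs hH hXH
end

section
/- Let ℛ : Λ²ℝⁿ → Λ²ℝⁿ be a symmetric linear operator (abstracting the Riemann curvature operator at a point), let w ∈ SO(n), and define R_w : Λ²ℝⁿ → Λ²ℝⁿ by ⟨R_w ξ, ξ'⟩ = ⟨ξ, w⁻¹ℛ(w(ξ'e₁) ∧ w(e₁))⟩, where w acts on Λ²ℝⁿ by w(u∧v) = wu ∧ wv. Then for every a ∈ SO(n-1) ⊂ SO(n) (stabilizer of e₁ under the diagonal embedding), R_{wa} = a⁻¹ ∘ R_w ∘ a, where a acts on Λ²ℝⁿ by the induced (adjoint) action. -/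
/-!
Both sides are skew, and `ip` is nondegenerate on skew maps, so it suffices to pair them with
an arbitrary skew `ξ'`. Writing `ip` as `½ tr(Aᵀ B)` shows that conjugation by an isometry
preserves it, so `ip (a⁻¹ R_w (a ξ a⁻¹) a) ξ' = ip (R_w (a ξ a⁻¹)) (a ξ' a⁻¹)`. Because `a` fixes
`e₁`, the defining identity of `R_w` at `a ξ' a⁻¹` is exactly that of `R_{wa}` at `ξ'`.
-/

open scoped RealInnerProductSpace
noncomputable section

abbrev Euc (n : ℕ) := EuclideanSpace ℝ (Fin n)

def e (n : ℕ) (i : Fin n) : Euc n := EuclideanSpace.single i 1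

/-- The skew-symmetric endomorphism associated to the 2-form `u ∧ v`,
namely `θ ↦ ⟪u,θ⟫ • v - ⟪v,θ⟫ • u`. -/
def wedge {n : ℕ} (u v : Euc n) : Euc n →ₗ[ℝ] Euc n where
  toFun θ := ⟪u, θ⟫ • v - ⟪v, θ⟫ • u
  map_add' x y := by simp [inner_add_right, add_smul]; abel
  map_smul' c x := by simp [inner_smul_right, mul_smul, smul_sub]

/-- The inner product on `Λ²ℝⁿ ≅ 𝔰𝔬(n)` making `(e_i ∧ e_j)_{i<j}` orthonormal:
`⟨A,B⟩ = ½ tr(Aᵀ B)`. -/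
def ip {n : ℕ} (A B : Euc n →ₗ[ℝ] Euc n) : ℝ :=
  (1 / 2) * ∑ i : Fin n, ⟪A (e n i), B (e n i)⟫

def IsSkew {n : ℕ} (A : Euc n →ₗ[ℝ] Euc n) : Prop :=
  ∀ x y : Euc n, ⟪A x, y⟫ = -⟪x, A y⟫

/-- The induced (adjoint / functorial) action of an isometry `a` on `Λ²ℝⁿ ≅ 𝔰𝔬(n)`:
`ξ ↦ a ∘ ξ ∘ a⁻¹`. -/
def conj {n : ℕ} (a : Euc n ≃ₗᵢ[ℝ] Euc n) (ξ : Euc n →ₗ[ℝ] Euc n) : Euc n →ₗ[ℝ] Euc n :=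
  (a.toLinearEquiv : Euc n →ₗ[ℝ] Euc n) ∘ₗ ξ ∘ₗ (a.symm.toLinearEquiv : Euc n →ₗ[ℝ] Euc n)

namespace IsSkew

variable {n : ℕ}

lemma conj {ξ : Euc n →ₗ[ℝ] Euc n} (hξ : IsSkew ξ) (a : Euc n ≃ₗᵢ[ℝ] Euc n) :
    IsSkew (conj a ξ) := fun x y =>
  calc ⟪a (ξ (a.symm x)), y⟫ = ⟪ξ (a.symm x), a.symm y⟫ := by
        rw [← a.inner_map_map _ (a.symm y), a.apply_symm_apply]
    _ = -⟪a.symm x, ξ (a.symm y)⟫ := hξ _ _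
    _ = -⟪x, a (ξ (a.symm y))⟫ := by rw [← a.inner_map_map (a.symm x), a.apply_symm_apply]

lemma sub {A B : Euc n →ₗ[ℝ] Euc n} (hA : IsSkew A) (hB : IsSkew B) : IsSkew (A - B) :=
  fun x y => by
    simp only [LinearMap.sub_apply, inner_sub_left, inner_sub_right, hA x y, hB x y]
    ring

end IsSkew

section ConjIp

variable {n : ℕ}

lemma conj_apply (a : Euc n ≃ₗᵢ[ℝ] Euc n) (ξ : Euc n →ₗ[ℝ] Euc n) (x : Euc n) :
    conj a ξ x = a (ξ (a.symm x)) := rfl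

lemma conj_trans (a b : Euc n ≃ₗᵢ[ℝ] Euc n) (ξ : Euc n →ₗ[ℝ] Euc n) :
    conj (a.trans b) ξ = conj b (conj a ξ) := rfl

lemma conj_comp (a : Euc n ≃ₗᵢ[ℝ] Euc n) (A B : Euc n →ₗ[ℝ] Euc n) :
    conj a A ∘ₗ conj a B = conj a (A ∘ₗ B) := by
  ext x
  simp [conj_apply]

lemma adjoint_conj (a : Euc n ≃ₗᵢ[ℝ] Euc n) (A : Euc n →ₗ[ℝ] Euc n) :
    LinearMap.adjoint (conj a A) = conj a (LinearMap.adjoint A) := by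
  simp only [conj, LinearMap.adjoint_comp, LinearIsometryEquiv.adjoint_toLinearMap_eq_symm,
    LinearIsometryEquiv.symm_symm, LinearMap.comp_assoc]

lemma trace_conj (a : Euc n ≃ₗᵢ[ℝ] Euc n) (T : Euc n →ₗ[ℝ] Euc n) :
    LinearMap.trace ℝ (Euc n) (conj a T) = LinearMap.trace ℝ (Euc n) T :=
  LinearMap.trace_conj' T a.toLinearEquiv

lemma ip_eq_trace (A B : Euc n →ₗ[ℝ] Euc n) :
    ip A B = (1 / 2) * LinearMap.trace ℝ (Euc n) (LinearMap.adjoint A ∘ₗ B) := by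
  simp only [ip, LinearMap.trace_eq_sum_inner _ (EuclideanSpace.basisFun (Fin n) ℝ),
    EuclideanSpace.basisFun_apply, LinearMap.comp_apply, LinearMap.adjoint_inner_right, e]

lemma ip_conj (a : Euc n ≃ₗᵢ[ℝ] Euc n) (A B : Euc n →ₗ[ℝ] Euc n) :
    ip (conj a A) (conj a B) = ip A B := by
  rw [ip_eq_trace, ip_eq_trace, adjoint_conj, conj_comp, trace_conj]

lemma ip_conj_left (a : Euc n ≃ₗᵢ[ℝ] Euc n) (A B : Euc n →ₗ[ℝ] Euc n) :
    ip (conj a A) B = ip A (conj a.symm B) := by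
  have hB : conj a (conj a.symm B) = B := by
    ext x
    simp [conj_apply]
  rw [← ip_conj a A, hB]

lemma ip_sub_left (A B C : Euc n →ₗ[ℝ] Euc n) : ip (A - B) C = ip A C - ip B C := by
  simp only [ip, LinearMap.sub_apply, inner_sub_left, Finset.sum_sub_distrib]
  ring

lemma ip_self_eq_zero {A : Euc n →ₗ[ℝ] Euc n} (h : ip A A = 0) : A = 0 := by
  have hsum : ∑ i : Fin n, ⟪A (e n i), A (e n i)⟫ = 0 := by
    rw [ip] at h
    linarith
  have hbasis : ∀ i, A (e n i) = 0 := fun i => inner_self_eq_zero.mp <|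
    (Finset.sum_eq_zero_iff_of_nonneg fun j _ => real_inner_self_nonneg).mp hsum i
      (Finset.mem_univ i)
  exact (EuclideanSpace.basisFun (Fin n) ℝ).toBasis.ext fun i => by simpa [e] using hbasis i

lemma IsSkew.ext_ip {A B : Euc n →ₗ[ℝ] Euc n} (hA : IsSkew A) (hB : IsSkew B)
    (h : ∀ ξ : Euc n →ₗ[ℝ] Euc n, IsSkew ξ → ip A ξ = ip B ξ) : A = B := by
  refine sub_eq_zero.mp (ip_self_eq_zero ?_)
  rw [ip_sub_left, h _ (hA.sub hB), sub_self]

end ConjIp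

theorem stmt7_general (n : ℕ) [NeZero n]
    (ℛ : (Euc n →ₗ[ℝ] Euc n) →ₗ[ℝ] (Euc n →ₗ[ℝ] Euc n))
    (Rw : (Euc n ≃ₗᵢ[ℝ] Euc n) → (Euc n →ₗ[ℝ] Euc n) → (Euc n →ₗ[ℝ] Euc n))
    (hRwSkew : ∀ w ξ, IsSkew ξ → IsSkew (Rw w ξ))
    (hRw : ∀ (w : Euc n ≃ₗᵢ[ℝ] Euc n) (ξ ξ' : Euc n →ₗ[ℝ] Euc n), IsSkew ξ → IsSkew ξ' →
      ip (Rw w ξ) ξ' = ip ξ (conj w.symm (ℛ (wedge (w (ξ' (e n 0))) (w (e n 0)))))) :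
    ∀ (w a : Euc n ≃ₗᵢ[ℝ] Euc n),
      LinearMap.det ((w.toLinearEquiv : Euc n →ₗ[ℝ] Euc n)) = 1 →
      LinearMap.det ((a.toLinearEquiv : Euc n →ₗ[ℝ] Euc n)) = 1 →
      a (e n 0) = e n 0 →
      ∀ ξ : Euc n →ₗ[ℝ] Euc n, IsSkew ξ →
        Rw (a.trans w) ξ = conj a.symm (Rw w (conj a ξ)) := by
  intro w a _ _ hae ξ hξ
  have hae_symm : a.symm (e n 0) = e n 0 := a.symm_apply_eq.mpr hae.symm
  refine (hRwSkew _ _ hξ).ext_ip ((hRwSkew w _ (hξ.conj a)).conj a.symm) fun ξ' hξ' => ?_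
  rw [ip_conj_left, LinearIsometryEquiv.symm_symm, hRw w _ _ (hξ.conj a) (hξ'.conj a),
    ip_conj_left, hRw _ _ _ hξ hξ', conj_apply, hae_symm, LinearIsometryEquiv.symm_trans,
    conj_trans, LinearIsometryEquiv.trans_apply, LinearIsometryEquiv.trans_apply, hae]

/-- Equivariance of the frame-bundle curvature operator: `R_{wa} = a⁻¹ ∘ R_w ∘ a`
for `a ∈ SO(n-1)` (the stabilizer of `e₁`). -/
theorem stmt7 (n : ℕ) (hn : 2 ≤ n) [NeZero n]
    (ℛ : (Euc n →ₗ[ℝ] Euc n) →ₗ[ℝ] (Euc n →ₗ[ℝ] Euc n))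
    (hsymm : ∀ A B : Euc n →ₗ[ℝ] Euc n, IsSkew A → IsSkew B → ip (ℛ A) B = ip A (ℛ B))
    (Rw : (Euc n ≃ₗᵢ[ℝ] Euc n) → (Euc n →ₗ[ℝ] Euc n) → (Euc n →ₗ[ℝ] Euc n))
    (hRwSkew : ∀ w ξ, IsSkew ξ → IsSkew (Rw w ξ))
    (hRw : ∀ (w : Euc n ≃ₗᵢ[ℝ] Euc n) (ξ ξ' : Euc n →ₗ[ℝ] Euc n), IsSkew ξ → IsSkew ξ' →
      ip (Rw w ξ) ξ' = ip ξ (conj w.symm (ℛ (wedge (w (ξ' (e n 0))) (w (e n 0)))))) :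
    ∀ (w a : Euc n ≃ₗᵢ[ℝ] Euc n),
      LinearMap.det ((w.toLinearEquiv : Euc n →ₗ[ℝ] Euc n)) = 1 →
      LinearMap.det ((a.toLinearEquiv : Euc n →ₗ[ℝ] Euc n)) = 1 →
      a (e n 0) = e n 0 →
      ∀ ξ : Euc n →ₗ[ℝ] Euc n, IsSkew ξ →
        Rw (a.trans w) ξ = conj a.symm (Rw w (conj a ξ)) :=
  stmt7_general n ℛ Rw hRwSkew hRw
end
end

section
/- In the abstract Pestov setup with X* = -X, [X,V] = -H, [X,H] = RV, H*V - V*H = -(n-1)X on a common domain D: if u ∈ D satisfies Xu = 0 and ⟨RVu, Vu⟩ ≤ 0 with equality only when Vu lies in the kernel of a fixed operator P with ⟨Rw,w⟩ = -‖Pw‖², then ‖XVu‖² = ‖PVu‖² = 0; if moreover ker P ∩ ker(X acting on the V-range) ∩ ker H-related conditions force Vu = 0 and Hu = 0, then all first derivatives of u vanish. In particular, in the hyperbolic case the only flow-invariant L²-functions are constants, i.e. the frame flow of a hyperbolic manifold is ergodic. -/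
/-!
For a flow-invariant `u`, the bracket relations give `R (V u) = -X (X (V u))`; since `X` is
skew-adjoint this makes `⟨R V u, V u⟩ = ‖X V u‖²`. In the hyperbolic case the left side is also
`-‖P V u‖²`, so both norms vanish.
-/

open scoped InnerProductSpace

section Commutators

variable {A M : Type*} [Ring A] [AddCommGroup M] [Module A M]

theorem apply_apply_eq_neg_apply_apply_of_apply_eq_zero {X V H R : M →ₗ[A] M}
    (hH : H = -(X ∘ₗ V - V ∘ₗ X)) (hXH : X ∘ₗ H - H ∘ₗ X = R ∘ₗ V) {u : M} (hu : X u = 0) :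
    R (V u) = -X (X (V u)) := by
  have hHu : H u = -X (V u) := by simp [hH, hu]
  simpa [hu, hHu] using (LinearMap.congr_fun hXH u).symm

end Commutators

section SkewAdjoint

variable {𝕜 E : Type*} [RCLike 𝕜] [NormedAddCommGroup E] [InnerProductSpace 𝕜 E]

theorem re_inner_apply_apply_self_of_skew {X : E →ₗ[𝕜] E}
    (hX : ∀ u v : E, ⟪X u, v⟫_𝕜 = -⟪u, X v⟫_𝕜) (w : E) :
    RCLike.re ⟪X (X w), w⟫_𝕜 = -‖X w‖ ^ 2 := by
  rw [hX, map_neg, inner_self_eq_norm_sq]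

theorem apply_eq_zero_and_apply_eq_zero_of_re_inner_eq {X V H R P : E →ₗ[𝕜] E}
    (hX : ∀ u v : E, ⟪X u, v⟫_𝕜 = -⟪u, X v⟫_𝕜)
    (hH : H = -(X ∘ₗ V - V ∘ₗ X)) (hXH : X ∘ₗ H - H ∘ₗ X = R ∘ₗ V)
    (hP : ∀ w : E, RCLike.re ⟪R w, w⟫_𝕜 = -‖P w‖ ^ 2) {u : E} (hu : X u = 0) :
    X (V u) = 0 ∧ P (V u) = 0 := by
  have hRV : RCLike.re ⟪R (V u), V u⟫_𝕜 = ‖X (V u)‖ ^ 2 := by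
    rw [apply_apply_eq_neg_apply_apply_of_apply_eq_zero hH hXH hu, inner_neg_left, map_neg,
      re_inner_apply_apply_self_of_skew hX, neg_neg]
  have hsum : ‖X (V u)‖ ^ 2 + ‖P (V u)‖ ^ 2 = 0 := by linarith [hP (V u)]
  rw [add_eq_zero_iff_of_nonneg (by positivity) (by positivity)] at hsum
  simpa using hsum

end SkewAdjoint

theorem stmt14_general {E : Type*} [NormedAddCommGroup E] [InnerProductSpace ℂ E]
    (X V H R Xs : E →ₗ[ℂ] E)
    (hXadj : ∀ u v : E, ⟪X u, v⟫_ℂ = ⟪u, Xs v⟫_ℂ)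
    (hXs : Xs = -X)
    (hH : H = -(X ∘ₗ V - V ∘ₗ X))
    (hXH : X ∘ₗ H - H ∘ₗ X = R ∘ₗ V) :
    ∀ (P : E →ₗ[ℂ] E), (∀ w : E, (⟪R w, w⟫_ℂ).re = -‖P w‖ ^ 2) →
      ∀ u : E, X u = 0 → X (V u) = 0 ∧ P (V u) = 0 := by
  intro P hP u hu
  have hX : ∀ u v : E, ⟪X u, v⟫_ℂ = -⟪u, X v⟫_ℂ := fun u v => by
    rw [hXadj, hXs, LinearMap.neg_apply, inner_neg_right]
  exact apply_eq_zero_and_apply_eq_zero_of_re_inner_eq hX hH hXH hP hu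

/-- Formalizable core of the ergodicity argument: under the four Pestov hypotheses together
with `⟨Rw,w⟩ = -‖Pw‖²` (hyperbolic case), any flow-invariant `u` (`Xu = 0`) satisfies
`X(Vu) = 0` and `P(Vu) = 0`, i.e. `‖XVu‖² = ‖PVu‖² = 0`. -/
theorem stmt14 {E : Type*} [NormedAddCommGroup E] [InnerProductSpace ℂ E]
    (n : ℕ) (X V H R Xs Vs Hs : E →ₗ[ℂ] E)
    (hXadj : ∀ u v : E, ⟪X u, v⟫_ℂ = ⟪u, Xs v⟫_ℂ)
    (hXs : Xs = -X)
    (hVadj : ∀ u v : E, ⟪V u, v⟫_ℂ = ⟪u, Vs v⟫_ℂ)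
    (hHadj : ∀ u v : E, ⟪H u, v⟫_ℂ = ⟪u, Hs v⟫_ℂ)
    (hH : H = -(X ∘ₗ V - V ∘ₗ X))
    (hXH : X ∘ₗ H - H ∘ₗ X = R ∘ₗ V)
    (hHV : Hs ∘ₗ V - Vs ∘ₗ H = (-((n : ℂ) - 1)) • X) :
    ∀ (P : E →ₗ[ℂ] E), (∀ w : E, (⟪R w, w⟫_ℂ).re = -‖P w‖ ^ 2) →
      ∀ u : E, X u = 0 → X (V u) = 0 ∧ P (V u) = 0 :=
  stmt14_general X V H R Xs hXadj hXs hH hXH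
end

section
/- In the abstract Pestov setup, the four hypotheses X* = -X, [X,V] = -H, [X,H] = RV, and H*V - V*H = -(n-1)X imply, purely algebraically: X*V*VX - V*X*XV = [X*,V*]VX - V*X*[X,V] = H*VX - V*XH = (H*V - V*H)X - V*[X,H] = -(n-1)X² - V*RV, and hence (using X* = -X) equals (n-1)X*X - V*RV. -/
/-!
Since `H = VX - XV`, the formal adjoint of `H` is `X*V* - V*X*`, and formal adjoints are unique,
so `H* = [X*, V*]`. After substituting this and the hypotheses, each equality of the chain is an
identity in the ring of endomorphisms.
-/

open scoped InnerProductSpace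

section FormalAdjoint

variable {𝕜 E F G : Type*} [RCLike 𝕜] [NormedAddCommGroup E] [InnerProductSpace 𝕜 E]
  [NormedAddCommGroup F] [InnerProductSpace 𝕜 F] [NormedAddCommGroup G] [InnerProductSpace 𝕜 G]

def LinearMap.IsFormalAdjoint (T : E →ₗ[𝕜] F) (Ts : F →ₗ[𝕜] E) : Prop :=
  ∀ u v, ⟪T u, v⟫_𝕜 = ⟪u, Ts v⟫_𝕜

namespace LinearMap.IsFormalAdjoint

variable {T T' : E →ₗ[𝕜] F} {Ts Ts' : F →ₗ[𝕜] E}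

theorem unique (h : IsFormalAdjoint T Ts) (h' : IsFormalAdjoint T Ts') : Ts = Ts' :=
  ext fun v ↦ ext_inner_left 𝕜 fun u ↦ by rw [← h, h']

theorem comp {S : F →ₗ[𝕜] G} {Ss : G →ₗ[𝕜] F} (hT : IsFormalAdjoint T Ts)
    (hS : IsFormalAdjoint S Ss) : IsFormalAdjoint (S ∘ₗ T) (Ts ∘ₗ Ss) := fun u v ↦
  (hS (T u) v).trans (hT u (Ss v))

theorem sub (h : IsFormalAdjoint T Ts) (h' : IsFormalAdjoint T' Ts') :
    IsFormalAdjoint (T - T') (Ts - Ts') := fun u v ↦ by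
  rw [sub_apply, sub_apply, inner_sub_left, inner_sub_right, h, h']

theorem commutator {T S Ts Ss : E →ₗ[𝕜] E} (hT : IsFormalAdjoint T Ts)
    (hS : IsFormalAdjoint S Ss) : IsFormalAdjoint (T ∘ₗ S - S ∘ₗ T) (Ss ∘ₗ Ts - Ts ∘ₗ Ss) :=
  (hS.comp hT).sub (hT.comp hS)

end LinearMap.IsFormalAdjoint

end FormalAdjoint

/-- The chain of five operator-algebra equalities in the proof of the pointwise
Pestov identity. -/
theorem stmt18 {E : Type*} [NormedAddCommGroup E] [InnerProductSpace ℂ E]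
    (n : ℕ) (X V H R Xs Vs Hs : E →ₗ[ℂ] E)
    (hXadj : ∀ u v : E, ⟪X u, v⟫_ℂ = ⟪u, Xs v⟫_ℂ)
    (hXs : Xs = -X)
    (hVadj : ∀ u v : E, ⟪V u, v⟫_ℂ = ⟪u, Vs v⟫_ℂ)
    (hHadj : ∀ u v : E, ⟪H u, v⟫_ℂ = ⟪u, Hs v⟫_ℂ)
    (hH : H = -(X ∘ₗ V - V ∘ₗ X))
    (hXH : X ∘ₗ H - H ∘ₗ X = R ∘ₗ V)
    (hHV : Hs ∘ₗ V - Vs ∘ₗ H = (-((n : ℂ) - 1)) • X) :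
    (Xs ∘ₗ Vs ∘ₗ V ∘ₗ X - Vs ∘ₗ Xs ∘ₗ X ∘ₗ V
        = (Xs ∘ₗ Vs - Vs ∘ₗ Xs) ∘ₗ (V ∘ₗ X) - (Vs ∘ₗ Xs) ∘ₗ (X ∘ₗ V - V ∘ₗ X)) ∧
    ((Xs ∘ₗ Vs - Vs ∘ₗ Xs) ∘ₗ (V ∘ₗ X) - (Vs ∘ₗ Xs) ∘ₗ (X ∘ₗ V - V ∘ₗ X)
        = Hs ∘ₗ V ∘ₗ X - Vs ∘ₗ X ∘ₗ H) ∧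
    (Hs ∘ₗ V ∘ₗ X - Vs ∘ₗ X ∘ₗ H
        = (Hs ∘ₗ V - Vs ∘ₗ H) ∘ₗ X - Vs ∘ₗ (X ∘ₗ H - H ∘ₗ X)) ∧
    ((Hs ∘ₗ V - Vs ∘ₗ H) ∘ₗ X - Vs ∘ₗ (X ∘ₗ H - H ∘ₗ X)
        = (-((n : ℂ) - 1)) • (X ∘ₗ X) - Vs ∘ₗ R ∘ₗ V) ∧
    ((-((n : ℂ) - 1)) • (X ∘ₗ X) - Vs ∘ₗ R ∘ₗ V
        = ((n : ℂ) - 1) • (Xs ∘ₗ X) - Vs ∘ₗ R ∘ₗ V) := by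
  rw [neg_sub] at hH
  have hHs : Hs = Xs ∘ₗ Vs - Vs ∘ₗ Xs :=
    LinearMap.IsFormalAdjoint.unique hHadj (hH ▸ LinearMap.IsFormalAdjoint.commutator hVadj hXadj)
  simp only [← Module.End.mul_eq_comp] at hH hXH hHV hHs ⊢
  refine ⟨by noncomm_ring, ?_, by noncomm_ring, ?_, ?_⟩
  · rw [hHs, hH, hXs]; noncomm_ring
  · rw [hHV, hXH, smul_mul_assoc]
  · rw [hXs, neg_mul, smul_neg, neg_smul]
end
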